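/- Let ψ be a conditionally negative definite function on a group L = A ⋊_α K (A abelian), and suppose there are ε', δ' > 0 such that every normalized positive definite function φ on L with inf_{v∈V}|φ(v)| ≥ 1 − δ' satisfies inf_{y∈α(K)(a)}|φ(y)| ≥ ε', where V is a generating set of L containing a ∈ A. Then sup_{y∈α(K)(a)} ψ(y) ≤ ((−log ε')/δ') · sup_{v∈V} ψ(v). -/

import Mathlib

open Finset

/-- A function `φ : F → ℂ` is positive definite if all the Gram-type sums
`Σᵢⱼ cᵢ c̄ⱼ φ(gⱼ⁻¹ gᵢ)` are nonnegative reals. -/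
def IsPosDefFn {F : Type*} [Group F] (φ : F → ℂ) : Prop :=
  ∀ (n : ℕ) (g : Fin n → F) (c : Fin n → ℂ),
    0 ≤ (∑ i, ∑ j, c i * (starRingEnd ℂ) (c j) * φ ((g j)⁻¹ * g i)).re ∧
      (∑ i, ∑ j, c i * (starRingEnd ℂ) (c j) * φ ((g j)⁻¹ * g i)).im = 0

/-- A function `ψ : F → ℝ` is conditionally negative definite if `ψ(1) = 0`,
`ψ(g⁻¹) = ψ(g)`, and `Σᵢⱼ cᵢ cⱼ ψ(gⱼ⁻¹ gᵢ) ≤ 0` whenever `Σᵢ cᵢ = 0`. -/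
def IsCondNegDefFn {F : Type*} [Group F] (ψ : F → ℝ) : Prop :=
  ψ 1 = 0 ∧ (∀ g : F, ψ g⁻¹ = ψ g) ∧
    ∀ (n : ℕ) (g : Fin n → F) (c : Fin n → ℝ), (∑ i, c i) = 0 →
      ∑ i, ∑ j, c i * c j * ψ ((g j)⁻¹ * g i) ≤ 0

/-!
Schoenberg's theorem: for `t ≥ 0` the function `exp (-t ψ)` is positive definite, because the
kernel `ψ(gᵢ) + ψ(gⱼ) - ψ(gᵢ⁻¹gⱼ)` is positive semidefinite (apply conditional negative
definiteness to the points `1, g₁, …, gₙ`), entrywise exponentials of positive semidefinite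
matrices are positive semidefinite (Schur product theorem and the exponential series), and
`exp (-t ψ(gᵢ⁻¹gⱼ))` is that exponential rescaled by `exp (-t ψ(gᵢ)) exp (-t ψ(gⱼ))`.
With `S = sup_V ψ` and `t = δ'/S`, the function `φ = exp (-t ψ)` satisfies `|φ| ≥ 1 - t ψ ≥ 1 - δ'`
on `V`, so the hypothesis gives `exp (-t ψ(y)) ≥ ε'` on the orbit, i.e. `ψ(y) ≤ (-log ε') S / δ'`.
When `S = 0` every `t > 0` is admissible, which forces `ψ(y) ≤ 0`.
-/

open Matrix
open scoped ComplexOrder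

namespace Matrix.PosSemidef

variable {n : Type*} [Fintype n]

theorem map_pow {𝕜 : Type*} [RCLike 𝕜] {A : Matrix n n 𝕜} (hA : A.PosSemidef) (m : ℕ) :
    (A.map (· ^ m)).PosSemidef := by
  induction m with
  | zero =>
    convert posSemidef_vecMulVec_self_star (1 : n → 𝕜)
    ext i j
    simp [vecMulVec_apply]
  | succ m ih =>
    convert ih.hadamard hA using 1
    ext i j
    simp [pow_succ]

theorem map_exp {A : Matrix n n ℝ} (hA : A.PosSemidef) : (A.map Real.exp).PosSemidef := by
  refine of_dotProduct_mulVec_nonneg (hA.isHermitian.map _ fun _ => rfl) fun x => ?_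
  have hsum : HasSum (fun m : ℕ => star x ⬝ᵥ (A.map (· ^ m) *ᵥ x) / m.factorial)
      (star x ⬝ᵥ (A.map Real.exp *ᵥ x)) := by
    simp only [dotProduct, mulVec, map_apply, Finset.mul_sum, Finset.sum_div]
    refine hasSum_sum fun i _ => hasSum_sum fun j _ => ?_
    have h := ((NormedSpace.expSeries_div_hasSum_exp (A i j)).mul_right (x j)).mul_left (star x i)
    rw [← Real.exp_eq_exp_ℝ] at h
    simpa only [mul_div_assoc, div_mul_eq_mul_div] using h
  exact hsum.nonneg fun m => div_nonneg ((hA.map_pow m).dotProduct_mulVec_nonneg x) (by positivity)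

theorem map_ofReal {A : Matrix n n ℝ} (hA : A.PosSemidef) :
    (A.map ((↑) : ℝ → ℂ)).PosSemidef := by
  obtain ⟨m, v, rfl⟩ := posSemidef_iff_eq_sum_vecMulVec.mp hA
  convert posSemidef_sum Finset.univ fun k _ =>
    posSemidef_vecMulVec_self_star fun i => (v k i : ℂ)
  ext i j
  simp [Matrix.sum_apply, vecMulVec_apply]

end Matrix.PosSemidef

section

variable {F : Type*} [Group F]

theorem isPosDefFn_of_posSemidef {φ : F → ℂ}
    (h : ∀ n (g : Fin n → F), (of fun i j => φ ((g i)⁻¹ * g j)).PosSemidef) :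
    IsPosDefFn φ := by
  intro n g c
  have hc := Complex.nonneg_iff.mp ((h n g).dotProduct_mulVec_nonneg c)
  have hsum : star c ⬝ᵥ (of (fun i j => φ ((g i)⁻¹ * g j)) *ᵥ c) =
      ∑ i, ∑ j, c i * (starRingEnd ℂ) (c j) * φ ((g j)⁻¹ * g i) := by
    simp only [dotProduct, mulVec, of_apply, Finset.mul_sum]
    rw [Finset.sum_comm]
    exact Finset.sum_congr rfl fun i _ => Finset.sum_congr rfl fun j _ => by simp; ring
  rw [hsum] at hc
  exact ⟨hc.1, hc.2.symm⟩

namespace IsCondNegDefFn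

variable {ψ : F → ℝ}

theorem apply_inv_mul_comm (hψ : IsCondNegDefFn ψ) (g h : F) : ψ (g⁻¹ * h) = ψ (h⁻¹ * g) := by
  rw [← hψ.2.1, _root_.mul_inv_rev, inv_inv]

theorem posSemidef_kernel (hψ : IsCondNegDefFn ψ) {n : ℕ} (g : Fin n → F) :
    (of fun i j => ψ (g i) + ψ (g j) - ψ ((g i)⁻¹ * g j)).PosSemidef := by
  refine PosSemidef.of_dotProduct_mulVec_nonneg ?_ fun x => ?_
  · ext i j
    simp only [conjTranspose_apply, of_apply, star_trivial, hψ.apply_inv_mul_comm (g j)]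
    ring
  have hswap : ∑ i, ∑ j, x i * x j * ψ ((g j)⁻¹ * g i) =
      ∑ i, ∑ j, x i * x j * ψ ((g i)⁻¹ * g j) := by
    rw [Finset.sum_comm]
    exact Finset.sum_congr rfl fun i _ => Finset.sum_congr rfl fun j _ => by ring
  have hsym : ∑ i, ∑ j, x i * x j * ψ (g j) = ∑ i, ∑ j, x i * x j * ψ (g i) := by
    rw [Finset.sum_comm]
    exact Finset.sum_congr rfl fun i _ => Finset.sum_congr rfl fun j _ => by ring
  have hcnd := hψ.2.2 (n + 1) (Fin.cons 1 g) (Fin.cons (-∑ i, x i) x) (by simp [Fin.sum_cons])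
  simp only [Fin.sum_univ_succ, Fin.cons_zero, Fin.cons_succ, inv_one, one_mul, mul_one, hψ.1,
    hψ.2.1, mul_zero, Finset.sum_const_zero, zero_add, Finset.sum_add_distrib, hswap, neg_mul,
    mul_neg, Finset.sum_neg_distrib, Finset.sum_mul, Finset.mul_sum] at hcnd
  have hform : star x ⬝ᵥ (of (fun i j => ψ (g i) + ψ (g j) - ψ ((g i)⁻¹ * g j)) *ᵥ x) =
      ∑ i, ∑ j, x i * x j * ψ (g i) + ∑ i, ∑ j, x i * x j * ψ (g j) -
        ∑ i, ∑ j, x i * x j * ψ ((g i)⁻¹ * g j) := by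
    simp only [dotProduct, mulVec, of_apply, star_trivial, Finset.mul_sum,
      ← Finset.sum_add_distrib, ← Finset.sum_sub_distrib]
    exact Finset.sum_congr rfl fun i _ => Finset.sum_congr rfl fun j _ => by ring
  rw [hform, hsym]
  simp only [mul_comm (x _) (x _)] at hcnd ⊢
  linarith

theorem nonneg (hψ : IsCondNegDefFn ψ) (g : F) : 0 ≤ ψ g := by
  have h := (hψ.posSemidef_kernel ![g]).diag_nonneg (i := 0)
  simp only [of_apply, Matrix.cons_val_zero, inv_mul_cancel, hψ.1] at h
  linarith

theorem posSemidef_exp (hψ : IsCondNegDefFn ψ) {t : ℝ} (ht : 0 ≤ t) {n : ℕ} (g : Fin n → F) :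
    (of fun i j => Real.exp (-(t * ψ ((g i)⁻¹ * g j)))).PosSemidef := by
  set d : Fin n → ℝ := fun i => Real.exp (-(t * ψ (g i)))
  have hfactor : (of fun i j => Real.exp (-(t * ψ ((g i)⁻¹ * g j)))) =
      (t • of fun i j => ψ (g i) + ψ (g j) - ψ ((g i)⁻¹ * g j)).map Real.exp ⊙
        vecMulVec d (star d) := by
    ext i j
    simp only [of_apply, map_apply, Matrix.smul_apply, hadamard_apply, vecMulVec_apply,
      star_trivial, smul_eq_mul, d, ← Real.exp_add]
    ring_nf
  rw [hfactor]
  exact ((hψ.posSemidef_kernel g).smul ht).map_exp.hadamard (posSemidef_vecMulVec_self_star d)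

theorem isPosDefFn_exp (hψ : IsCondNegDefFn ψ) {t : ℝ} (ht : 0 ≤ t) :
    IsPosDefFn fun g => (Real.exp (-(t * ψ g)) : ℂ) :=
  isPosDefFn_of_posSemidef fun _ g => (hψ.posSemidef_exp ht g).map_ofReal

end IsCondNegDefFn

end

theorem le_div_mul_of_forall_mul_le {x c δ S : ℝ} (hδ : 0 < δ) (hS : 0 ≤ S)
    (h : ∀ t, 0 ≤ t → t * S ≤ δ → t * x ≤ c) : x ≤ c / δ * S := by
  have hc : 0 ≤ c := by simpa using h 0 le_rfl (by simpa using hδ.le)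
  rcases hS.lt_or_eq with hS | rfl
  · have := h (δ / S) (by positivity) (div_mul_cancel₀ δ hS.ne').le
    rw [div_mul_eq_mul_div, div_le_iff₀ hS] at this
    rw [div_mul_eq_mul_div, le_div_iff₀ hδ]
    linarith
  · by_contra! hx
    rw [mul_zero] at hx
    have := h ((c + 1) / x) (by positivity) (by simpa using hδ.le)
    rw [div_mul_cancel₀ _ hx.ne'] at this
    linarith

theorem stmt_17_general {A K : Type*} [CommGroup A] [Group K] (α : K →* MulAut A)
    (a : A) (V : Set (A ⋊[α] K)) (hVfin : V.Finite)
    (haV : SemidirectProduct.inl a ∈ V)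
    (ε' δ' : ℝ) (hε' : 0 < ε') (hδ' : 0 < δ')
    (hyp : ∀ φ : A ⋊[α] K → ℂ, IsPosDefFn φ → φ 1 = 1 →
      (∀ v ∈ V, 1 - δ' ≤ ‖φ v‖) →
      ∀ k : K, ε' ≤ ‖φ (SemidirectProduct.inl (α k a))‖)
    (ψ : A ⋊[α] K → ℝ) (hψ : IsCondNegDefFn ψ) :
    ∀ k : K, ψ (SemidirectProduct.inl (α k a)) ≤
      ((-Real.log ε') / δ') * sSup (ψ '' V) := by
  intro k
  have hle : ∀ v ∈ V, ψ v ≤ sSup (ψ '' V) := fun v hv =>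
    le_csSup (hVfin.image ψ).bddAbove (Set.mem_image_of_mem ψ hv)
  refine le_div_mul_of_forall_mul_le hδ' ((hψ.nonneg _).trans (hle _ haV)) fun t ht htV => ?_
  have hφV : ∀ v ∈ V, 1 - δ' ≤ ‖(Real.exp (-(t * ψ v)) : ℂ)‖ := fun v hv => by
    rw [Complex.norm_real, Real.norm_of_nonneg (Real.exp_pos _).le]
    linarith [Real.add_one_le_exp (-(t * ψ v)), mul_le_mul_of_nonneg_left (hle v hv) ht]
  have h := hyp _ (hψ.isPosDefFn_exp ht) (by simp [hψ.1]) hφV k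
  rw [Complex.norm_real, Real.norm_of_nonneg (Real.exp_pos _).le] at h
  linarith [(Real.log_le_iff_le_exp hε').mpr h]

/-- Let `ψ` be conditionally negative definite on `L = A ⋊_α K` (`A` abelian), and
suppose there are `ε', δ' > 0` such that every normalized positive definite `φ` on `L`
with `inf_{v ∈ V} |φ(v)| ≥ 1 − δ'` satisfies `inf_{y ∈ α(K)(a)} |φ(y)| ≥ ε'`, where `V`
is a generating set of `L` containing `a ∈ A`. Then
`sup_{y ∈ α(K)(a)} ψ(y) ≤ ((−log ε')/δ') · sup_{v ∈ V} ψ(v)`. -/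
theorem stmt_17 {A K : Type*} [CommGroup A] [Group K] (α : K →* MulAut A)
    (a : A) (V : Set (A ⋊[α] K)) (hVfin : V.Finite) (hVne : V.Nonempty)
    (hVgen : Subgroup.closure V = ⊤) (haV : SemidirectProduct.inl a ∈ V)
    (ε' δ' : ℝ) (hε' : 0 < ε') (hδ' : 0 < δ')
    (hyp : ∀ φ : A ⋊[α] K → ℂ, IsPosDefFn φ → φ 1 = 1 →
      (∀ v ∈ V, 1 - δ' ≤ ‖φ v‖) →
      ∀ k : K, ε' ≤ ‖φ (SemidirectProduct.inl (α k a))‖)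
    (ψ : A ⋊[α] K → ℝ) (hψ : IsCondNegDefFn ψ) :
    ∀ k : K, ψ (SemidirectProduct.inl (α k a)) ≤
      ((-Real.log ε') / δ') * sSup (ψ '' V) :=
  stmt_17_general α a V hVfin haV ε' δ' hε' hδ' hyp ψ hψ
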